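/- Let r ≥ 3 and n ≥ r^4/3. If H is an intersecting r-uniform n-vertex hypergraph with minimum positive co-degree at least 2 having the maximum number of hyperedges among all such hypergraphs, then H is a 2-kernel system: there exists a 3-element vertex set X such that the hyperedges of H are exactly the r-sets meeting X in at least 2 vertices. -/

import Mathlib

/-!
If `v ∈ e ∈ H`, co-degree two yields an edge `e - v + w` with `w ∉ e`; in particular no vertex
meets every edge. A 2-kernel system is admissible, so `|H| ≥ 3 C(n-3, r-2) + C(n-3, r-3)`, while the
branching bound caps intersecting families of covering number at least 3 at `r³ C(n-3, r-3)`;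
hence a pair `{x, y}` meets every edge. Shifting swaps `x` and `y` in the edges through exactly one
of them, so the links of `x` and of `y` in these edges coincide. This common link is intersecting
and has at least `C(n-3, r-2)` members, which the branching bound forbids unless some `z` lies in
all of them. Then every edge meets `{x, y, z}` twice, and maximality gives equality.
-/

open Finset

section

variable {V : Type*} [DecidableEq V]

lemma card_filter_superset_le {G : Finset (Finset V)} {U T : Finset V} {k : ℕ}
    (hG : G ⊆ U.powersetCard k) (hTU : T ⊆ U) :
    #{e ∈ G | T ⊆ e} ≤ (#U - #T).choose (k - #T) := by
  calc #{e ∈ G | T ⊆ e} ≤ #((U \ T).powersetCard (k - #T)) := by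
        refine card_le_card_of_injOn (· \ T) (fun e he => ?_) (fun e he e' he' h => ?_)
        · obtain ⟨heG, hTe⟩ := mem_filter.1 he
          obtain ⟨heU, hek⟩ := mem_powersetCard.1 (hG heG)
          exact mem_powersetCard.2 ⟨sdiff_subset_sdiff heU subset_rfl,
            by rw [card_sdiff_of_subset hTe, hek]⟩
        · rw [← sdiff_union_of_subset (mem_filter.1 he).2,
            ← sdiff_union_of_subset (mem_filter.1 he').2]
          exact congrArg (· ∪ T) h
    _ = (#U - #T).choose (k - #T) := by rw [card_powersetCard, card_sdiff_of_subset hTU]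

/-- Every edge through `T` meets an edge `f` disjoint from `T`, so it passes through one of the
`k` sets `T + w`, `w ∈ f`. -/
lemma card_le_pow_mul_choose_of_forall_exists_disjoint {G : Finset (Finset V)} {U : Finset V}
    {k s : ℕ} (hG : G ⊆ U.powersetCard k) (hint : (G : Set (Finset V)).Intersecting)
    (hτ : ∀ T : Finset V, #T < s → ∃ f ∈ G, Disjoint f T) :
    #G ≤ k ^ s * (#U - s).choose (k - s) := by
  suffices key : ∀ j, ∀ T ⊆ U, #T + j = s →
      #{e ∈ G | T ⊆ e} ≤ k ^ j * (#U - s).choose (k - s) by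
    simpa using key s ∅ (empty_subset U) (zero_add s)
  intro j
  induction j with
  | zero =>
    intro T hTU hT
    simpa [← hT] using card_filter_superset_le hG hTU
  | succ j ih =>
    intro T hTU hT
    obtain ⟨f, hf, hfT⟩ := hτ T (by omega)
    obtain ⟨hfU, hfk⟩ := mem_powersetCard.1 (hG hf)
    calc #{e ∈ G | T ⊆ e} ≤ #(f.biUnion fun w => {e ∈ G | insert w T ⊆ e}) := by
          refine card_le_card fun e he => ?_
          obtain ⟨heG, hTe⟩ := mem_filter.1 he
          obtain ⟨w, hw⟩ := not_disjoint_iff_nonempty_inter.1 (hint heG hf)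
          obtain ⟨hwe, hwf⟩ := mem_inter.1 hw
          exact mem_biUnion.2 ⟨w, hwf, mem_filter.2 ⟨heG, insert_subset hwe hTe⟩⟩
      _ ≤ #f * (k ^ j * (#U - s).choose (k - s)) := by
          refine card_biUnion_le_card_mul _ _ _ fun w hw =>
            ih _ (insert_subset (hfU hw) hTU) ?_
          rw [card_insert_of_notMem (disjoint_left.1 hfT hw)]
          omega
      _ = k ^ (j + 1) * (#U - s).choose (k - s) := by rw [hfk]; ring

section Kernel

variable [Fintype V]

lemma card_powersetCard_filter_inter_eq {X p : Finset V} {k : ℕ} (hpX : p ⊆ X) (hpk : #p ≤ k) :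
    #{E ∈ univ.powersetCard k | E ∩ X = p} = (Fintype.card V - #X).choose (k - #p) := by
  rw [← card_compl, ← card_powersetCard]
  refine card_nbij' (· \ X) (· ∪ p) (fun E hE => ?_) (fun s hs => ?_) (fun E hE => ?_)
    (fun s hs => ?_)
  · obtain ⟨hE, hEX⟩ := mem_filter.1 hE
    rw [mem_powersetCard] at hE
    rw [mem_coe, mem_powersetCard, ← hE.2, ← hEX, ← card_sdiff_add_card_inter E X,
      Nat.add_sub_cancel]
    exact ⟨fun v hv => mem_compl.2 (mem_sdiff.1 hv).2, rfl⟩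
  · obtain ⟨hsX, hs⟩ := mem_powersetCard.1 hs
    have hdisj : Disjoint s X := by simpa [subset_compl_iff_disjoint_right] using hsX
    rw [mem_coe, mem_filter, mem_powersetCard, card_union_of_disjoint (hdisj.mono_right hpX), hs,
      union_inter_distrib_right, disjoint_iff_inter_eq_empty.1 hdisj, inter_eq_left.2 hpX,
      empty_union]
    exact ⟨⟨subset_univ _, by omega⟩, rfl⟩
  · obtain ⟨-, rfl⟩ := mem_filter.1 hE
    exact sdiff_union_inter E X
  · have hdisj : Disjoint s X := by
      simpa [subset_compl_iff_disjoint_right] using (mem_powersetCard.1 hs).1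
    dsimp only
    rw [union_sdiff_distrib, hdisj.sdiff_eq_left, sdiff_eq_empty_iff_subset.2 hpX, union_empty]

def kernelSystem (r : ℕ) (X : Finset V) : Finset (Finset V) :=
  {E ∈ univ.powersetCard r | 2 ≤ #(E ∩ X)}

lemma card_kernelSystem {r : ℕ} {X : Finset V} (hr : 3 ≤ r) (hX : #X = 3) :
    #(kernelSystem r X) =
      3 * (Fintype.card V - 3).choose (r - 2) + (Fintype.card V - 3).choose (r - 3) := by
  rw [kernelSystem, card_eq_sum_card_fiberwise (f := (· ∩ X)) (t := X.powerset)
    (fun E _ => mem_powerset.2 inter_subset_right)]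
  have hfiber : ∀ p ∈ X.powerset,
      #{E ∈ {E ∈ univ.powersetCard r | 2 ≤ #(E ∩ X)} | E ∩ X = p} =
        if 2 ≤ #p then (Fintype.card V - 3).choose (r - #p) else 0 := by
    intro p hp
    rw [filter_filter]
    split_ifs with h
    · rw [← hX, ← card_powersetCard_filter_inter_eq (mem_powerset.1 hp)]
      · exact congrArg card (filter_congr fun E _ => and_iff_right_of_imp fun hE => hE ▸ h)
      · have := card_le_card (mem_powerset.1 hp); omega
    · simp only [card_eq_zero, filter_eq_empty_iff]
      rintro E - ⟨h2, rfl⟩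
      exact h h2
  rw [sum_congr rfl hfiber, sum_powerset_apply_card
    (fun m => if 2 ≤ m then (Fintype.card V - 3).choose (r - m) else 0), hX]
  simp [sum_range_succ]

lemma kernelSystem_intersecting {r : ℕ} {X : Finset V} (hX : #X = 3) :
    (kernelSystem r X : Set (Finset V)).Intersecting := by
  intro E hE F hF
  rw [not_disjoint_iff_nonempty_inter]
  have hE := (mem_filter.1 hE).2
  have hF := (mem_filter.1 hF).2
  exact (inter_nonempty_of_card_lt_card_add_card (inter_subset_right (s₁ := E) (s₂ := X))
    (inter_subset_right (s₁ := F)) (by omega)).mono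
    (inter_subset_inter inter_subset_left inter_subset_left)

lemma kernelSystem_codegree {r : ℕ} {X S : Finset V} (hX : #X = 3) (hr : r < Fintype.card V)
    (hS : #S = r - 1) (hSK : ∃ E ∈ kernelSystem r X, S ⊆ E) :
    2 ≤ #{E ∈ kernelSystem r X | S ⊆ E} := by
  obtain ⟨E, hE, hSE⟩ := hSK
  obtain ⟨hEr, hEX⟩ := mem_filter.1 hE
  rw [mem_powersetCard] at hEr
  have hSr : #S + 1 = r := by
    have := card_le_card (inter_subset_left (s₁ := E) (s₂ := X)); omega
  obtain ⟨B, hBS, hB, hBX⟩ : ∃ B, Disjoint B S ∧ 2 ≤ #B ∧ ∀ w ∈ B, 2 ≤ #(insert w S ∩ X) := by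
    by_cases hSX : 2 ≤ #(S ∩ X)
    · refine ⟨Sᶜ, disjoint_compl_left, by rw [card_compl]; omega, fun w _ => ?_⟩
      exact hSX.trans (card_le_card (inter_subset_inter_right (subset_insert w S)))
    · obtain ⟨a, -, rfl⟩ := exists_eq_insert_iff.2 ⟨hSE, by omega⟩
      have hSX1 : #(S ∩ X) = 1 := by
        have hsub : insert a S ∩ X ⊆ insert a (S ∩ X) := by
          rw [insert_inter_distrib]; exact inter_subset_inter_left (subset_insert a X)
        have := (card_le_card hsub).trans (card_insert_le a _)
        omega
      refine ⟨X \ S, sdiff_disjoint, by rw [card_sdiff, hSX1, hX], fun w hw => ?_⟩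
      rw [insert_inter_of_mem (mem_sdiff.1 hw).1,
        card_insert_of_notMem fun h => (mem_sdiff.1 hw).2 (mem_inter.1 h).1, hSX1]
  calc 2 ≤ #(B.image (insert · S)) := by
        rwa [card_image_of_injOn fun w hw w' _ h => (insert_inj (disjoint_left.1 hBS hw)).1 h]
    _ ≤ #{E ∈ kernelSystem r X | S ⊆ E} := by
        refine card_le_card fun E hE => ?_
        obtain ⟨w, hw, rfl⟩ := mem_image.1 hE
        refine mem_filter.2 ⟨mem_filter.2 ⟨mem_powersetCard.2 ⟨subset_univ _, ?_⟩, hBX w hw⟩,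
          subset_insert w S⟩
        rw [card_insert_of_notMem (disjoint_left.1 hBS hw), hSr]

end Kernel

section Shift

variable {H : Finset (Finset V)}

lemma exists_insert_erase_mem {r : ℕ} (hunif : ∀ h ∈ H, #h = r)
    (hcodeg : ∀ S : Finset V, #S = r - 1 → (∃ h ∈ H, S ⊆ h) → 2 ≤ #{h ∈ H | S ⊆ h})
    {e : Finset V} (he : e ∈ H) {v : V} (hv : v ∈ e) : ∃ w ∉ e, insert w (e.erase v) ∈ H := by
  have hS : #(e.erase v) = r - 1 := by rw [card_erase_of_mem hv, hunif e he]
  obtain ⟨e', he', hne⟩ := exists_mem_ne (hcodeg _ hS ⟨e, he, erase_subset v e⟩) e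
  obtain ⟨he'H, hsub⟩ := mem_filter.1 he'
  obtain ⟨w, hw, rfl⟩ := exists_eq_insert_iff.2
    ⟨hsub, by rw [card_erase_add_one hv, hunif e he, hunif _ he'H]⟩
  refine ⟨w, fun hwe => hne ?_, he'H⟩
  rw [show w = v by by_contra h; exact hw (mem_erase.2 ⟨h, hwe⟩), insert_erase hv]

lemma exists_notMem_of_shift (hstep : ∀ e ∈ H, ∀ v ∈ e, ∃ w ∉ e, insert w (e.erase v) ∈ H)
    (hH : H.Nonempty) (v : V) : ∃ e ∈ H, v ∉ e := by
  by_contra! h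
  obtain ⟨e, he⟩ := hH
  obtain ⟨w, hw, hwH⟩ := hstep e he v (h e he)
  rcases mem_insert.1 (h _ hwH) with rfl | hv
  · exact hw (h e he)
  · exact notMem_erase v e hv

end Shift

section Link

variable {H : Finset (Finset V)} {x y : V}

def linkAvoiding (H : Finset (Finset V)) (x y : V) : Finset (Finset V) :=
  {e ∈ H | x ∈ e ∧ y ∉ e}.image (·.erase x)

lemma card_linkAvoiding : #(linkAvoiding H x y) = #{e ∈ H | x ∈ e ∧ y ∉ e} :=
  card_image_of_injOn fun e he e' he' h => by
    rw [← insert_erase (mem_filter.1 he).2.1, ← insert_erase (mem_filter.1 he').2.1]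
    exact congrArg (insert x) h

lemma linkAvoiding_subset_powersetCard [Fintype V] {r : ℕ} (hunif : ∀ h ∈ H, #h = r) :
    linkAvoiding H x y ⊆ ({x, y}ᶜ : Finset V).powersetCard (r - 1) := by
  intro d hd
  obtain ⟨e, he, rfl⟩ := mem_image.1 hd
  obtain ⟨heH, hx, hy⟩ := mem_filter.1 he
  refine mem_powersetCard.2 ⟨fun v hv => ?_, by rw [card_erase_of_mem hx, hunif e heH]⟩
  obtain ⟨hvx, hve⟩ := mem_erase.1 hv
  simp only [mem_compl, mem_insert, mem_singleton, not_or]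
  exact ⟨hvx, fun h => hy (h ▸ hve)⟩

lemma linkAvoiding_subset_linkAvoiding
    (hstep : ∀ e ∈ H, ∀ v ∈ e, ∃ w ∉ e, insert w (e.erase v) ∈ H)
    (hcov : ∀ e ∈ H, x ∈ e ∨ y ∈ e) : linkAvoiding H x y ⊆ linkAvoiding H y x := by
  intro d hd
  obtain ⟨e, he, rfl⟩ := mem_image.1 hd
  obtain ⟨heH, hx, hy⟩ := mem_filter.1 he
  obtain ⟨w, hw, hwH⟩ := hstep e heH x hx
  have hye : y ∉ e.erase x := fun h => hy (mem_of_mem_erase h)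
  have hxw : x ∉ insert w (e.erase x) := by
    rw [mem_insert, not_or]
    exact ⟨fun h => hw (h ▸ hx), notMem_erase x e⟩
  obtain rfl : w = y := by
    rcases hcov _ hwH with h | h
    · exact absurd h hxw
    · exact ((mem_insert.1 h).resolve_right hye).symm
  exact mem_image.2 ⟨_, mem_filter.2 ⟨hwH, mem_insert_self w _, hxw⟩, erase_insert hye⟩

lemma linkAvoiding_comm (hstep : ∀ e ∈ H, ∀ v ∈ e, ∃ w ∉ e, insert w (e.erase v) ∈ H)
    (hcov : ∀ e ∈ H, x ∈ e ∨ y ∈ e) : linkAvoiding H x y = linkAvoiding H y x :=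
  (linkAvoiding_subset_linkAvoiding hstep hcov).antisymm
    (linkAvoiding_subset_linkAvoiding hstep fun e he => (hcov e he).symm)

lemma linkAvoiding_intersecting (hint : (H : Set (Finset V)).Intersecting)
    (hstep : ∀ e ∈ H, ∀ v ∈ e, ∃ w ∉ e, insert w (e.erase v) ∈ H)
    (hcov : ∀ e ∈ H, x ∈ e ∨ y ∈ e) : (linkAvoiding H x y : Set (Finset V)).Intersecting := by
  intro d hd d' hd'
  rw [mem_coe, linkAvoiding_comm hstep hcov] at hd'
  obtain ⟨e, he, rfl⟩ := mem_image.1 hd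
  obtain ⟨e', he', rfl⟩ := mem_image.1 hd'
  obtain ⟨heH, -, hy⟩ := mem_filter.1 he
  obtain ⟨he'H, -, hx'⟩ := mem_filter.1 he'
  obtain ⟨v, hv⟩ := not_disjoint_iff_nonempty_inter.1 (hint heH he'H)
  obtain ⟨hve, hve'⟩ := mem_inter.1 hv
  refine not_disjoint_iff_nonempty_inter.2 ⟨v, mem_inter.2 ⟨mem_erase.2 ⟨?_, hve⟩,
    mem_erase.2 ⟨?_, hve'⟩⟩⟩
  · rintro rfl; exact hx' hve'
  · rintro rfl; exact hy hve

lemma card_le_two_mul_card_linkAvoiding_add [Fintype V] {r : ℕ} (hunif : ∀ h ∈ H, #h = r)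
    (hstep : ∀ e ∈ H, ∀ v ∈ e, ∃ w ∉ e, insert w (e.erase v) ∈ H)
    (hcov : ∀ e ∈ H, x ∈ e ∨ y ∈ e) (hxy : x ≠ y) :
    #H ≤ 2 * #(linkAvoiding H x y) + (Fintype.card V - 2).choose (r - 2) := by
  have hboth : #{e ∈ H | {x, y} ⊆ e} ≤ (Fintype.card V - 2).choose (r - 2) := by
    simpa [card_pair hxy] using card_filter_superset_le (U := univ) (T := {x, y})
      (fun e he => mem_powersetCard.2 ⟨subset_univ e, hunif e he⟩) (subset_univ _)
  calc #H ≤ #({e ∈ H | x ∈ e ∧ y ∉ e} ∪ {e ∈ H | y ∈ e ∧ x ∉ e} ∪ {e ∈ H | {x, y} ⊆ e}) := by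
        refine card_le_card fun e he => ?_
        simp only [mem_union, mem_filter, insert_subset_iff, singleton_subset_iff]
        have := hcov e he
        tauto
    _ ≤ #{e ∈ H | x ∈ e ∧ y ∉ e} + #{e ∈ H | y ∈ e ∧ x ∉ e} + #{e ∈ H | {x, y} ⊆ e} :=
        (card_union_le _ _).trans (Nat.add_le_add_right (card_union_le _ _) _)
    _ ≤ 2 * #(linkAvoiding H x y) + (Fintype.card V - 2).choose (r - 2) := by
        rw [← card_linkAvoiding, ← card_linkAvoiding, ← linkAvoiding_comm hstep hcov]
        omega

end Link

lemma add_two_le_of_pow_four_le {r n : ℕ} (hr : 3 ≤ r) (hn : r ^ 4 ≤ 3 * n) : r + 2 ≤ n := by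
  obtain ⟨s, rfl⟩ := Nat.exists_eq_add_of_le' hr
  ring_nf at hn ⊢
  nlinarith [Nat.zero_le s, Nat.zero_le (s ^ 2), Nat.zero_le (s ^ 3)]

lemma cube_mul_choose_lt {r n : ℕ} (hr : 3 ≤ r) (hn : r ^ 4 ≤ 3 * n) :
    r ^ 3 * (n - 3).choose (r - 3) < 3 * (n - 3).choose (r - 2) := by
  obtain ⟨s, rfl⟩ := Nat.exists_eq_add_of_le' hr
  have hm : (s + 3) ^ 3 * (s + 1) + 3 * s + 9 < 3 * n := by
    ring_nf at hn ⊢; nlinarith [Nat.zero_le s, Nat.zero_le (s ^ 2), Nat.zero_le (s ^ 3)]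
  obtain ⟨m, rfl⟩ : ∃ m, n = m + s + 3 := ⟨n - s - 3, by omega⟩
  have hpascal := Nat.choose_succ_right_eq (m + s) s
  have hpos : 0 < (m + s).choose s := Nat.choose_pos (by omega)
  simp only [Nat.add_sub_cancel, show s + 3 - 2 = s + 1 by omega,
    show m + s + 3 - 3 = m + s by omega] at hpascal ⊢
  refine Nat.lt_of_mul_lt_mul_right (a := s + 1) ?_
  rw [mul_assoc 3, hpascal]
  nlinarith

lemma sq_mul_choose_lt {r n : ℕ} (hr : 3 ≤ r) (hn : r ^ 4 ≤ 3 * n) :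
    (r - 1) ^ 2 * (n - 4).choose (r - 3) < (n - 3).choose (r - 2) := by
  obtain ⟨s, rfl⟩ := Nat.exists_eq_add_of_le' hr
  have hm : 3 * (s + 2) ^ 2 * (s + 1) + 9 < 3 * n := by
    ring_nf at hn ⊢; nlinarith [Nat.zero_le s, Nat.zero_le (s ^ 2), Nat.zero_le (s ^ 3)]
  obtain ⟨m, rfl⟩ : ∃ m, n = m + 4 := ⟨n - 4, by omega⟩
  have hpascal := Nat.add_one_mul_choose_eq m s
  have hpos : 0 < m.choose s := Nat.choose_pos (by nlinarith)
  simp only [Nat.add_sub_cancel, show s + 3 - 2 = s + 1 by omega, show s + 3 - 1 = s + 2 by omega,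
    show m + 4 - 3 = m + 1 by omega] at hpascal ⊢
  refine Nat.lt_of_mul_lt_mul_right (a := s + 1) ?_
  rw [← hpascal]
  nlinarith

section Structure

variable [Fintype V] {H : Finset (Finset V)} {r : ℕ}

lemma exists_pair_cover (hunif : ∀ h ∈ H, #h = r) (hint : (H : Set (Finset V)).Intersecting)
    (hstep : ∀ e ∈ H, ∀ v ∈ e, ∃ w ∉ e, insert w (e.erase v) ∈ H)
    (hH : r ^ 3 * (Fintype.card V - 3).choose (r - 3) < #H) :
    ∃ x y, x ≠ y ∧ ∀ e ∈ H, x ∈ e ∨ y ∈ e := by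
  by_contra! hno
  have hτ : ∀ T : Finset V, #T < 3 → ∃ f ∈ H, Disjoint f T := by
    intro T hT
    interval_cases h : #T
    · obtain ⟨f, hf⟩ := card_pos.1 (pos_of_gt hH)
      exact ⟨f, hf, by rw [card_eq_zero.1 h]; exact disjoint_empty_right f⟩
    · obtain ⟨a, rfl⟩ := card_eq_one.1 h
      obtain ⟨f, hf, haf⟩ := exists_notMem_of_shift hstep (card_pos.1 (pos_of_gt hH)) a
      exact ⟨f, hf, disjoint_singleton_right.2 haf⟩
    · obtain ⟨a, b, hab, rfl⟩ := card_eq_two.1 h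
      obtain ⟨f, hf, haf, hbf⟩ := hno a b hab
      exact ⟨f, hf, disjoint_insert_right.2 ⟨haf, disjoint_singleton_right.2 hbf⟩⟩
  refine hH.not_ge ?_
  simpa using card_le_pow_mul_choose_of_forall_exists_disjoint (U := univ) (s := 3)
    (fun e he => mem_powersetCard.2 ⟨subset_univ e, hunif e he⟩) hint hτ

lemma exists_forall_mem_linkAvoiding {x y : V} (hr : 3 ≤ r)
    (hn : r ^ 4 ≤ 3 * Fintype.card V) (hunif : ∀ h ∈ H, #h = r)
    (hint : (H : Set (Finset V)).Intersecting)
    (hstep : ∀ e ∈ H, ∀ v ∈ e, ∃ w ∉ e, insert w (e.erase v) ∈ H)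
    (hcov : ∀ e ∈ H, x ∈ e ∨ y ∈ e) (hxy : x ≠ y)
    (hH : 3 * (Fintype.card V - 3).choose (r - 2) + (Fintype.card V - 3).choose (r - 3) ≤ #H) :
    ∃ z ∉ ({x, y} : Finset V), ∀ d ∈ linkAvoiding H x y, z ∈ d := by
  have hrn := add_two_le_of_pow_four_le hr hn
  have hpascal : (Fintype.card V - 2).choose (r - 2) =
      (Fintype.card V - 3).choose (r - 3) + (Fintype.card V - 3).choose (r - 2) := by
    rw [show Fintype.card V - 2 = Fintype.card V - 3 + 1 by omega,
      show r - 2 = r - 3 + 1 by omega, Nat.choose_succ_succ]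
  have hlink := card_le_two_mul_card_linkAvoiding_add hunif hstep hcov hxy
  have hpos : 0 < (Fintype.card V - 3).choose (r - 2) := Nat.choose_pos (by omega)
  obtain ⟨d₀, hd₀⟩ : (linkAvoiding H x y).Nonempty := card_pos.1 (by omega)
  have hD := linkAvoiding_subset_powersetCard (x := x) (y := y) hunif
  obtain ⟨z, hz⟩ : ∃ z, ∀ d ∈ linkAvoiding H x y, z ∈ d := by
    by_contra! hno
    have hτ : ∀ T : Finset V, #T < 2 → ∃ d ∈ linkAvoiding H x y, Disjoint d T := by
      intro T hT
      interval_cases h : #T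
      · exact ⟨d₀, hd₀, by rw [card_eq_zero.1 h]; exact disjoint_empty_right d₀⟩
      · obtain ⟨a, rfl⟩ := card_eq_one.1 h
        obtain ⟨d, hd, had⟩ := hno a
        exact ⟨d, hd, disjoint_singleton_right.2 had⟩
    have hbound := card_le_pow_mul_choose_of_forall_exists_disjoint hD
      (linkAvoiding_intersecting hint hstep hcov) hτ
    rw [card_compl, card_pair hxy, show Fintype.card V - 2 - 2 = Fintype.card V - 4 by omega,
      show r - 1 - 2 = r - 3 by omega] at hbound
    have := sq_mul_choose_lt hr hn
    omega
  exact ⟨z, mem_compl.1 ((mem_powersetCard.1 (hD hd₀)).1 (hz d₀ hd₀)), hz⟩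

lemma subset_kernelSystem {x y z : V} (hunif : ∀ h ∈ H, #h = r)
    (hstep : ∀ e ∈ H, ∀ v ∈ e, ∃ w ∉ e, insert w (e.erase v) ∈ H)
    (hcov : ∀ e ∈ H, x ∈ e ∨ y ∈ e) (hxy : x ≠ y) (hzx : z ≠ x) (hzy : z ≠ y)
    (hz : ∀ d ∈ linkAvoiding H x y, z ∈ d) : H ⊆ kernelSystem r {x, y, z} := by
  intro e he
  refine mem_filter.2 ⟨mem_powersetCard.2 ⟨subset_univ e, hunif e he⟩, ?_⟩
  have two_le {a b : V} (hab : a ≠ b) (ha : a ∈ e) (hb : b ∈ e)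
      (haX : a ∈ ({x, y, z} : Finset V)) (hbX : b ∈ ({x, y, z} : Finset V)) :
      2 ≤ #(e ∩ {x, y, z}) :=
    one_lt_card.2 ⟨a, mem_inter.2 ⟨ha, haX⟩, b, mem_inter.2 ⟨hb, hbX⟩, hab⟩
  have z_mem {a b : V} (hab : linkAvoiding H a b = linkAvoiding H x y) (ha : a ∈ e)
      (hb : b ∉ e) : z ∈ e := by
    have hlink : e.erase a ∈ linkAvoiding H a b := mem_image_of_mem _ (mem_filter.2 ⟨he, ha, hb⟩)
    rw [hab] at hlink
    exact mem_of_mem_erase (hz _ hlink)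
  by_cases hx : x ∈ e <;> by_cases hy : y ∈ e
  · exact two_le hxy hx hy (by simp) (by simp)
  · exact two_le hzx (z_mem rfl hx hy) hx (by simp) (by simp)
  · exact two_le hzy (z_mem (linkAvoiding_comm hstep hcov).symm hy hx) hy (by simp) (by simp)
  · exact absurd (hcov e he) (by tauto)

end Structure

end

/-- For r ≥ 3 and n ≥ r⁴/3, a maximum-size intersecting r-uniform n-vertex hypergraph
with minimum positive co-degree at least 2 is a 2-kernel system. -/
theorem stmt_10 {V : Type*} [Fintype V] [DecidableEq V] (r n : ℕ)
    (hr : 3 ≤ r) (hn : Fintype.card V = n) (hn2 : r ^ 4 ≤ 3 * n)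
    (H : Finset (Finset V))
    (hunif : ∀ h ∈ H, h.card = r)
    (hint : ∀ a ∈ H, ∀ b ∈ H, (a ∩ b).Nonempty)
    (hcodeg : ∀ S : Finset V, S.card = r - 1 → (∃ h ∈ H, S ⊆ h) →
      2 ≤ (H.filter fun h => S ⊆ h).card)
    (hmax : ∀ H' : Finset (Finset V),
      (∀ h ∈ H', h.card = r) →
      (∀ a ∈ H', ∀ b ∈ H', (a ∩ b).Nonempty) →
      (∀ S : Finset V, S.card = r - 1 → (∃ h ∈ H', S ⊆ h) →
        2 ≤ (H'.filter fun h => S ⊆ h).card) →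
      H'.card ≤ H.card) :
    ∃ X : Finset V, X.card = 3 ∧
      H = (Finset.univ.powersetCard r).filter (fun E : Finset V => 2 ≤ (E ∩ X).card) := by
  subst hn
  have hHint : (H : Set (Finset V)).Intersecting := fun a ha b hb =>
    not_disjoint_iff_nonempty_inter.2 (hint a ha b hb)
  have hstep : ∀ e ∈ H, ∀ v ∈ e, ∃ w ∉ e, insert w (e.erase v) ∈ H := fun e he v hv =>
    exists_insert_erase_mem hunif hcodeg he hv
  have hrn := add_two_le_of_pow_four_le hr hn2
  have hK (X : Finset V) (hX : #X = 3) : #(kernelSystem r X) ≤ #H :=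
    hmax _ (fun E hE => (mem_powersetCard.1 (mem_filter.1 hE).1).2)
      (fun a ha b hb => not_disjoint_iff_nonempty_inter.1 (kernelSystem_intersecting hX ha hb))
      fun S hS hSK => kernelSystem_codegree hX (by omega) hS hSK
  obtain ⟨X₀, -, hX₀⟩ := exists_subset_card_eq (show 3 ≤ #(univ : Finset V) by
    rw [card_univ]; omega)
  have hH := card_kernelSystem hr hX₀ ▸ hK X₀ hX₀
  obtain ⟨x, y, hxy, hcov⟩ := exists_pair_cover hunif hHint hstep
    (by have := cube_mul_choose_lt hr hn2; omega)
  obtain ⟨z, hzxy, hz⟩ := exists_forall_mem_linkAvoiding hr hn2 hunif hHint hstep hcov hxy hH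
  obtain ⟨hzx, hzy⟩ : z ≠ x ∧ z ≠ y := by simpa using hzxy
  have hX : #({x, y, z} : Finset V) = 3 :=
    card_eq_three.2 ⟨x, y, z, hxy, hzx.symm, hzy.symm, rfl⟩
  exact ⟨{x, y, z}, hX,
    eq_of_subset_of_card_le (subset_kernelSystem hunif hstep hcov hxy hzx hzy hz) (hK _ hX)⟩
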